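/- Let n ∈ ℝ with n ≠ 0 and n ≠ −1, let r, c₁ ∈ ℝ, and let φ : J → (0,∞) be twice differentiable on an open interval J ⊆ ℝ, satisfying n·φ'(ω)·(φ(ω)ⁿ − 1) = 2r·φ(ω)^{n+1} + c₁ for all ω ∈ J. Then φ satisfies the reduced ODE (25) on J with p = 4(n+1)²r²/n² (equivalently p = 4(1 + 1/n)²r²). -/
import Mathlib


open Real Set

noncomputable section

/-- The reduced ODE (25):
`[(4r² − p)n² + 4(2n+1)r²]φ^{n+1} + 4n(n+1)[nφ'' − 2(n+1)rφ']φⁿ + 4n³(n+1)(φ')²φ^{n−1}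
 − 4n²(n+1)φ'' = 0`, for a positive function `φ` with first and second derivatives
`φ'`, `φ''`. -/
def ODE25 (n r p : ℝ) (φ φ' φ'' : ℝ → ℝ) (ω : ℝ) : Prop :=
  ((4 * r ^ 2 - p) * n ^ 2 + 4 * (2 * n + 1) * r ^ 2) * φ ω ^ (n + 1)
    + 4 * n * (n + 1) * (n * φ'' ω - 2 * (n + 1) * r * φ' ω) * φ ω ^ n
    + 4 * n ^ 3 * (n + 1) * (φ' ω) ^ 2 * φ ω ^ (n - 1)
    - 4 * n ^ 2 * (n + 1) * φ'' ω = 0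

/-- The first-order relation `nφ'(φⁿ − 1) = 2rφ^{n+1} + c₁` is a first
integral of the reduced ODE (25) with `p = 4(n+1)²r²/n²`. -/
theorem first_integral
    (n : ℝ) (hn : n ≠ 0) (hn1 : n ≠ -1) (r c₁ : ℝ)
    (J : Set ℝ) (hJ : IsOpen J) (hJc : J.OrdConnected)
    (φ φ' φ'' : ℝ → ℝ) (hφpos : ∀ ω ∈ J, 0 < φ ω)
    (hd1 : ∀ ω ∈ J, HasDerivAt φ (φ' ω) ω) (hd2 : ∀ ω ∈ J, HasDerivAt φ' (φ'' ω) ω)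
    (hFI : ∀ ω ∈ J, n * φ' ω * (φ ω ^ n - 1) = 2 * r * φ ω ^ (n + 1) + c₁) :
    ∀ ω ∈ J, ODE25 n r (4 * (n + 1) ^ 2 * r ^ 2 / n ^ 2) φ φ' φ'' ω := by
  intro ω hω
  have hf : 0 < φ ω := hφpos ω hω
  have hmem : J ∈ nhds ω := hJ.mem_nhds hω
  have hFG : (fun x => n * φ' x * (φ x ^ n - 1)) =ᶠ[nhds ω]
      (fun x => 2 * r * φ x ^ (n + 1) + c₁) :=
    Filter.eventually_of_mem hmem hFI
  have hp : HasDerivAt (fun x => φ x ^ n) (φ' ω * n * φ ω ^ (n - 1)) ω :=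
    (hd1 ω hω).rpow_const (Or.inl hf.ne')
  have hD1 : HasDerivAt (fun x => n * φ' x * (φ x ^ n - 1))
      (n * φ'' ω * (φ ω ^ n - 1) + n * φ' ω * (φ' ω * n * φ ω ^ (n - 1))) ω :=
    ((hd2 ω hω).const_mul n).mul (hp.sub_const 1)
  have hD2 : HasDerivAt (fun x => 2 * r * φ x ^ (n + 1) + c₁)
      (2 * r * (φ' ω * (n + 1) * φ ω ^ (n + 1 - 1))) ω :=
    (((hd1 ω hω).rpow_const (Or.inl hf.ne')).const_mul (2 * r)).add_const c₁
  have heq := hD1.unique (hD2.congr_of_eventuallyEq hFG)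
  have hA : φ ω ^ (n + 1) = φ ω ^ n * φ ω := by
    rw [Real.rpow_add hf, Real.rpow_one]
  have hB : φ ω ^ (n - 1) = φ ω ^ n / φ ω := by
    rw [Real.rpow_sub hf, Real.rpow_one]
  rw [add_sub_cancel_right, hB] at heq
  have hC : n * φ'' ω * (φ ω ^ n - 1) * φ ω + n ^ 2 * (φ' ω) ^ 2 * φ ω ^ n
      = 2 * r * (n + 1) * φ ω ^ n * φ' ω * φ ω := by
    have h := congrArg (· * φ ω) heq
    field_simp at h
    linarith [h]
  rw [ODE25, hA, hB]
  have hn2 : (n : ℝ) ^ 2 ≠ 0 := pow_ne_zero 2 hn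
  field_simp
  linear_combination (4 * n * (n + 1)) * hC


end
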